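/- arXiv:2510.15508 — 5 statements merged into one kernel-verified Lean document; each statement's English description precedes it below -/
import Mathlib

section
/- Let (S, μ) be a measure space with μ a finite measure, let 0 < δ ≤ ε ≤ 1/e², let f : S → ℝ≥0 be a probability density with respect to μ (i.e., ∫ f dμ = 1), and let g : S → ℝ≥0 satisfy |f(s) - g(s)| ≤ ε and g(s) ≥ δ for all s. Then |∫ f(s)(log f(s) - log g(s)) dμ(s)| ≤ 2√ε + μ(S)·√ε·log(1/ε + 1/δ). -/
/-!
Pointwise, with `t = √ε` and `L = log (1/ε + 1/δ)`, the integrand obeys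
`|f (log f - log g)| ≤ 2 t f + t L`. From below this is Gibbs' inequality
`f (log g - log f) ≤ g - f ≤ ε = t²`. From above, where `f ≥ t` the relative error
`(f - g) / f ≤ t` gives `log f - log g ≤ 2t`, and where `f < t` one uses `f / g ≤ 1 / δ`.
Integrating against the probability density `f` and the finite measure `μ` gives the bound.
-/

open MeasureTheory

namespace Real

lemma mul_log_sub_log_le_sub {x y : ℝ} (hx : 0 ≤ x) (hy : 0 < y) :
    x * (log y - log x) ≤ y - x := by
  rcases hx.eq_or_lt with rfl | hx
  · simpa using hy.le
  have hlog : log y - log x ≤ y / x - 1 := by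
    rw [← log_div hy.ne' hx.ne']
    exact log_le_sub_one_of_pos (by positivity)
  calc x * (log y - log x) ≤ x * (y / x - 1) := by gcongr
    _ = y - x := by field_simp

lemma log_sub_log_le_two_mul {x y t : ℝ} (hx : 0 < x) (hy : 0 < y) (ht₀ : 0 ≤ t)
    (ht : t ≤ 1 / 2) (hxy : x - y ≤ t * x) : log x - log y ≤ 2 * t := by
  have hratio : x / y - 1 ≤ 2 * t := by
    rw [sub_le_iff_le_add, div_le_iff₀ hy]
    nlinarith [mul_nonneg ht₀ (by linarith : 0 ≤ y - (1 - t) * x),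
      mul_nonneg (mul_nonneg ht₀ hx.le) (by linarith : 0 ≤ 1 - 2 * t)]
  rw [← log_div hx.ne' hy.ne']
  exact (log_le_sub_one_of_pos (by positivity)).trans hratio

lemma abs_mul_log_sub_log_le {x y δ t L : ℝ} (hx : 0 ≤ x) (hδ : 0 < δ) (hy : δ ≤ y)
    (ht₀ : 0 ≤ t) (ht : t ≤ 1 / 2) (htL : t ≤ L) (hδL : -log δ ≤ L)
    (hxy : |x - y| ≤ t ^ 2) :
    |x * (log x - log y)| ≤ 2 * t * x + t * L := by
  have hy₀ : 0 < y := hδ.trans_le hy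
  rcases hx.eq_or_lt with rfl | hx
  · simpa using mul_nonneg ht₀ (ht₀.trans htL)
  obtain ⟨hyx, hxy⟩ := abs_le.mp hxy
  rw [abs_le]
  constructor
  · have hgibbs := mul_log_sub_log_le_sub hx.le hy₀
    nlinarith
  rcases lt_or_ge x t with hxt | hxt
  · have hlog : log x - log y ≤ -log δ := by
      rw [← log_div hx.ne' hy₀.ne', ← log_inv]
      refine log_le_log (by positivity) ?_
      rw [div_le_iff₀ hy₀, inv_mul_eq_div, le_div_iff₀ hδ]
      nlinarith
    nlinarith
  · have hrel : x - y ≤ t * x := by nlinarith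
    have hlog := log_sub_log_le_two_mul hx hy₀ ht₀ ht hrel
    nlinarith

lemma four_le_exp_two : 4 ≤ exp 2 := by
  rw [show (2 : ℝ) = 1 + 1 by norm_num, exp_add]
  nlinarith [exp_one_gt_two]

lemma sqrt_le_one_half_of_le_one_div_exp_two {ε : ℝ} (hε : ε ≤ 1 / exp 2) :
    √ε ≤ 1 / 2 := by
  refine sqrt_le_iff.mpr ⟨by norm_num, hε.trans ?_⟩
  rw [div_le_iff₀ (exp_pos 2)]
  linarith [four_le_exp_two]

lemma two_le_log_one_div_add_one_div {ε δ : ℝ} (hε₀ : 0 < ε) (hε : ε ≤ 1 / exp 2)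
    (hδ : 0 < δ) :
    2 ≤ log (1 / ε + 1 / δ) := by
  rw [le_log_iff_exp_le (by positivity)]
  have := (le_one_div (exp_pos 2) hε₀).mpr hε
  linarith [one_div_pos.mpr hδ]

end Real

theorem kl_error_estimate_general {S : Type*} [MeasurableSpace S] (μ : Measure S) [IsFiniteMeasure μ]
    (ε δ : ℝ) (hδ : 0 < δ) (hδε : δ ≤ ε) (hε : ε ≤ 1 / Real.exp 2)
    (f g : S → ℝ) (hf0 : ∀ s, 0 ≤ f s)
    (hfdens : ∫ s, f s ∂μ = 1)
    (hfg : ∀ s, |f s - g s| ≤ ε) (hgδ : ∀ s, δ ≤ g s) :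
    |∫ s, f s * (Real.log (f s) - Real.log (g s)) ∂μ| ≤
      2 * Real.sqrt ε + (μ Set.univ).toReal * Real.sqrt ε * Real.log (1 / ε + 1 / δ) := by
  have hε₀ : 0 < ε := hδ.trans_le hδε
  set t := √ε
  set L := Real.log (1 / ε + 1 / δ)
  have ht : t ≤ 1 / 2 := Real.sqrt_le_one_half_of_le_one_div_exp_two hε
  have htL : t ≤ L := by linarith [Real.two_le_log_one_div_add_one_div hε₀ hε hδ]
  have hδL : -Real.log δ ≤ L := by
    rw [← Real.log_inv, ← one_div]
    exact Real.log_le_log (by positivity) (by linarith [one_div_pos.mpr hε₀])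
  have hfi : Integrable f μ := .of_integral_ne_zero (by rw [hfdens]; exact one_ne_zero)
  have hbound : Integrable (fun s => 2 * t * f s + t * L) μ :=
    (hfi.const_mul _).add (integrable_const _)
  calc |∫ s, f s * (Real.log (f s) - Real.log (g s)) ∂μ|
      ≤ ∫ s, (2 * t * f s + t * L) ∂μ :=
        (Real.norm_eq_abs _).ge.trans <| norm_integral_le_of_norm_le hbound <|
          .of_forall fun s => Real.abs_mul_log_sub_log_le (hf0 s) hδ (hgδ s)
            (Real.sqrt_nonneg ε) ht htL hδL (by rw [Real.sq_sqrt hε₀.le]; exact hfg s)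
    _ = 2 * t + (μ Set.univ).toReal * t * L := by
        rw [integral_add (hfi.const_mul _) (integrable_const _), integral_const_mul, hfdens,
          integral_const, smul_eq_mul, measureReal_def]
        ring

/-- If `f` is a probability density w.r.t. a finite measure `μ`, and `g ≥ δ` satisfies
`|f - g| ≤ ε` pointwise with `0 < δ ≤ ε ≤ 1/e²`, then
`|∫ f (log f - log g) dμ| ≤ 2√ε + μ(S) √ε log(1/ε + 1/δ)`. -/
theorem kl_error_estimate {S : Type*} [MeasurableSpace S] (μ : Measure S) [IsFiniteMeasure μ]
    (ε δ : ℝ) (hδ : 0 < δ) (hδε : δ ≤ ε) (hε : ε ≤ 1 / Real.exp 2)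
    (f g : S → ℝ) (hf0 : ∀ s, 0 ≤ f s)
    (hfdens : ∫ s, f s ∂μ = 1)
    (hfg : ∀ s, |f s - g s| ≤ ε) (hgδ : ∀ s, δ ≤ g s)
    (hint : Integrable (fun s => f s * (Real.log (f s) - Real.log (g s))) μ) :
    |∫ s, f s * (Real.log (f s) - Real.log (g s)) ∂μ| ≤
      2 * Real.sqrt ε + (μ Set.univ).toReal * Real.sqrt ε * Real.log (1 / ε + 1 / δ) :=
  kl_error_estimate_general μ ε δ hδ hδε hε f g hf0 hfdens hfg hgδ
end

section
/- Let (S, μ) be a measure space with μ a finite measure, 0 < ε ≤ 1/e², and let f : S → ℝ≥0 be a probability density with respect to μ. Let A = {s ∈ S : f(s) ≤ √ε}. Then |∫_A f(s) log f(s) dμ(s)| ≤ (μ(S)/2)·√ε·log(1/ε). -/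
/-!
Since `√ε ≤ e⁻¹` and `x ↦ x log x` is nonpositive and decreasing on `[0, e⁻¹]`, the integrand
is bounded in absolute value on `{f ≤ √ε}` by `-√ε log √ε = (√ε / 2) log (1 / ε)`; integrating
this constant over a subset of `S` gives at most `μ(S)` times it.
-/

open MeasureTheory Real

lemma abs_mul_log_le_of_le_exp_neg_one {x a : ℝ} (hx : 0 ≤ x) (hxa : x ≤ a)
    (ha : a ≤ exp (-1)) : |x * log x| ≤ -(a * log a) := by
  have hx1 : x ≤ 1 := hxa.trans (ha.trans (exp_le_one_iff.2 (by norm_num)))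
  rw [abs_of_nonpos (mul_log_nonpos hx hx1), neg_le_neg_iff]
  exact mul_log_strictAntiOn.antitoneOn ⟨hx, hxa.trans ha⟩ ⟨hx.trans hxa, ha⟩ hxa

lemma sqrt_le_exp_neg_one_of_le {ε : ℝ} (hε : ε ≤ 1 / exp 2) : √ε ≤ exp (-1) := by
  rw [sqrt_le_left (exp_pos _).le, ← exp_nat_mul]
  simpa [← exp_neg] using hε

lemma neg_sqrt_mul_log_sqrt {ε : ℝ} (hε : 0 ≤ ε) :
    -(√ε * log √ε) = √ε / 2 * log (1 / ε) := by
  rw [log_sqrt hε, one_div, log_inv]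
  ring

lemma abs_setIntegral_le_of_abs_le {S : Type*} [MeasurableSpace S] {μ : Measure S}
    [IsFiniteMeasure μ] {g : S → ℝ} {s : Set S} {C : ℝ} (hC : 0 ≤ C)
    (hg : ∀ x ∈ s, |g x| ≤ C) : |∫ x in s, g x ∂μ| ≤ C * μ.real Set.univ :=
  calc |∫ x in s, g x ∂μ| ≤ C * μ.real s :=
        norm_setIntegral_le_of_norm_le_const (f := g) (measure_lt_top μ s) hg
    _ ≤ C * μ.real Set.univ :=
        mul_le_mul_of_nonneg_left (measureReal_mono (Set.subset_univ s)) hC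

theorem small_density_log_integral_bound_general {S : Type*} [MeasurableSpace S]
    (μ : Measure S) [IsFiniteMeasure μ]
    (ε : ℝ) (hε0 : 0 < ε) (hε : ε ≤ 1 / Real.exp 2)
    (f : S → ℝ) (hf0 : ∀ s, 0 ≤ f s) :
    |∫ s in {s | f s ≤ Real.sqrt ε}, f s * Real.log (f s) ∂μ| ≤
      (μ Set.univ).toReal / 2 * Real.sqrt ε * Real.log (1 / ε) := by
  have hsqrt := sqrt_le_exp_neg_one_of_le hε
  have hbound : ∀ s ∈ {s | f s ≤ √ε}, |f s * log (f s)| ≤ -(√ε * log √ε) :=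
    fun s hs => abs_mul_log_le_of_le_exp_neg_one (hf0 s) hs hsqrt
  have hC : 0 ≤ -(√ε * log √ε) :=
    (abs_nonneg _).trans (abs_mul_log_le_of_le_exp_neg_one (sqrt_nonneg ε) le_rfl hsqrt)
  calc |∫ s in {s | f s ≤ √ε}, f s * log (f s) ∂μ|
        ≤ -(√ε * log √ε) * μ.real Set.univ := abs_setIntegral_le_of_abs_le hC hbound
    _ = (μ Set.univ).toReal / 2 * √ε * log (1 / ε) := by
        rw [neg_sqrt_mul_log_sqrt hε0.le, measureReal_def]; ring

/-- If `f` is a probability density w.r.t. a finite measure `μ` and `0 < ε ≤ 1/e²`, then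
on the set `A = {s : f s ≤ √ε}` we have `|∫_A f log f dμ| ≤ (μ(S)/2) √ε log(1/ε)`. -/
theorem small_density_log_integral_bound {S : Type*} [MeasurableSpace S]
    (μ : Measure S) [IsFiniteMeasure μ]
    (ε : ℝ) (hε0 : 0 < ε) (hε : ε ≤ 1 / Real.exp 2)
    (f : S → ℝ) (hf0 : ∀ s, 0 ≤ f s) (hfdens : ∫ s, f s ∂μ = 1)
    (hint : IntegrableOn (fun s => f s * Real.log (f s)) {s | f s ≤ Real.sqrt ε} μ) :
    |∫ s in {s | f s ≤ Real.sqrt ε}, f s * Real.log (f s) ∂μ| ≤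
      (μ Set.univ).toReal / 2 * Real.sqrt ε * Real.log (1 / ε) :=
  small_density_log_integral_bound_general μ ε hε0 hε f hf0
end

section
/- Let H be a reproducing kernel Hilbert space on ℝ^d with positive definite kernel k satisfying K := sup_u k(u,u) < ∞. Let μ be a probability measure over ℝ^d and g ∈ L²(μ). Then for every positive integer m there exist points u₁, ..., u_m ∈ ℝ^d such that ‖∫ k(u,·) g(u) dμ(u) - (1/m) Σᵢ k(uᵢ,·) g(uᵢ)‖_H ≤ √K · ‖g‖_{L²(μ)} / √m. -/
open MeasureTheory
open scoped RealInnerProductSpace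

/-- Positively-weighted kernel quadrature: given an RKHS `H` on `ℝ^d` with feature map `φ`
(`k u v = ⟪φ u, φ v⟫`) whose kernel satisfies `k u u ≤ K`, a probability measure `μ`, and
`g ∈ L²(μ)`, for every `m > 0` there exist points `u₁, …, u_m` with
`‖∫ k(u,·) g(u) dμ(u) - (1/m) ∑ᵢ k(uᵢ,·) g(uᵢ)‖_H ≤ √K ‖g‖_{L²(μ)} / √m`. -/
theorem kernel_quadrature_exists {d : ℕ}
    {H : Type*} [NormedAddCommGroup H] [InnerProductSpace ℝ H] [CompleteSpace H]
    (φ : EuclideanSpace ℝ (Fin d) → H) (K : ℝ)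
    (hK : ∀ u, ⟪φ u, φ u⟫ ≤ K)
    (μ : Measure (EuclideanSpace ℝ (Fin d))) [IsProbabilityMeasure μ]
    (g : EuclideanSpace ℝ (Fin d) → ℝ)
    (hg2 : Integrable (fun u => g u ^ 2) μ)
    (hgφ : Integrable (fun u => g u • φ u) μ)
    (m : ℕ) (hm : 0 < m) :
    ∃ u : Fin m → EuclideanSpace ℝ (Fin d),
      ‖(∫ v, g v • φ v ∂μ) - (1 / (m : ℝ)) • ∑ i, g (u i) • φ (u i)‖ ≤
        Real.sqrt K * Real.sqrt (∫ v, g v ^ 2 ∂μ) / Real.sqrt m := by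
  set b : H := ∫ v, g v • φ v ∂μ with hb
  set C : ℝ := K * ∫ v, g v ^ 2 ∂μ with hC
  have hK0 : 0 ≤ K := le_trans (real_inner_self_nonneg) (hK 0)
  have hg20 : 0 ≤ ∫ v, g v ^ 2 ∂μ := integral_nonneg fun v => sq_nonneg _
  have hC0 : 0 ≤ C := mul_nonneg hK0 hg20
  -- pointwise bound on ‖g v • φ v‖²
  have hnormsq : ∀ v, ‖g v • φ v‖ ^ 2 ≤ K * g v ^ 2 := by
    intro v
    have h1 : ‖g v • φ v‖ ^ 2 = g v ^ 2 * ⟪φ v, φ v⟫ := by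
      rw [real_inner_self_eq_norm_sq, norm_smul, mul_pow, Real.norm_eq_abs, sq_abs]
    rw [h1, mul_comm K]
    exact mul_le_mul_of_nonneg_left (hK v) (sq_nonneg _)
  -- integrability of ‖g v • φ v‖²
  have hint_normsq : Integrable (fun v => ‖g v • φ v‖ ^ 2) μ := by
    refine Integrable.mono' (hg2.const_mul K) ?_ ?_
    · exact (hgφ.aestronglyMeasurable.norm.aemeasurable.pow_const 2).aestronglyMeasurable
    · filter_upwards with v
      rw [Real.norm_eq_abs, abs_of_nonneg (sq_nonneg _)]
      exact hnormsq v
  have hintnsq_le : (∫ v, ‖g v • φ v‖ ^ 2 ∂μ) ≤ C := by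
    rw [hC]
    calc (∫ v, ‖g v • φ v‖ ^ 2 ∂μ) ≤ ∫ v, K * g v ^ 2 ∂μ :=
          integral_mono hint_normsq (hg2.const_mul K) hnormsq
      _ = K * ∫ v, g v ^ 2 ∂μ := integral_const_mul K _
  -- main induction
  have main : ∀ n : ℕ, ∃ u : Fin n → EuclideanSpace ℝ (Fin d),
      ‖(n : ℝ) • b - ∑ i, g (u i) • φ (u i)‖ ^ 2 ≤ n * C := by
    intro n
    induction n with
    | zero => exact ⟨Fin.elim0, by simp⟩
    | succ n ih =>
      obtain ⟨u, hu⟩ := ih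
      set S : H := ∑ i, g (u i) • φ (u i) with hS
      set e : H := (n : ℝ) • b - S with he
      have hintc : Integrable (fun v => b - g v • φ v) μ := by
        exact (integrable_const b).sub hgφ
      have hintc0 : (∫ v, (b - g v • φ v) ∂μ) = 0 := by
        rw [integral_sub (integrable_const b) hgφ, integral_const]
        simp [hb]
      have hintc_inner : Integrable (fun v => 2 * ⟪e, b - g v • φ v⟫) μ := by
        exact (hintc.const_inner e).const_mul 2
      have hintb_inner : Integrable (fun v => 2 * ⟪b, g v • φ v⟫) μ := by
        exact (hgφ.const_inner b).const_mul 2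
      have hintA : Integrable (fun v => ‖b‖ ^ 2 - 2 * ⟪b, g v • φ v⟫) μ := by
        exact (integrable_const _).sub hintb_inner
      have hintcsq : Integrable (fun v => ‖b - g v • φ v‖ ^ 2) μ := by
        have heq : (fun v => ‖b - g v • φ v‖ ^ 2) =
            fun v => (‖b‖ ^ 2 - 2 * ⟪b, g v • φ v⟫) + ‖g v • φ v‖ ^ 2 := by
          funext v; rw [norm_sub_sq_real]
        rw [heq]
        exact hintA.add hint_normsq
      have hintcsq_le : (∫ v, ‖b - g v • φ v‖ ^ 2 ∂μ) ≤ C := by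
        have heq2 : (∫ v, ‖b - g v • φ v‖ ^ 2 ∂μ) =
            ‖b‖ ^ 2 - 2 * ⟪b, b⟫ + ∫ v, ‖g v • φ v‖ ^ 2 ∂μ := by
          have heq : (fun v => ‖b - g v • φ v‖ ^ 2) =
              fun v => (‖b‖ ^ 2 - 2 * ⟪b, g v • φ v⟫) + ‖g v • φ v‖ ^ 2 := by
            funext v; rw [norm_sub_sq_real]
          rw [heq, integral_add hintA hint_normsq,
            integral_sub (integrable_const _) hintb_inner,
            integral_const, integral_const_mul, integral_inner hgφ, ← hb]
          simp
        rw [heq2, real_inner_self_eq_norm_sq]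
        nlinarith [hintnsq_le, sq_nonneg ‖b‖]
      have hintE : Integrable (fun v => ‖e‖ ^ 2 + 2 * ⟪e, b - g v • φ v⟫) μ := by
        exact (integrable_const _).add hintc_inner
      have hinth : Integrable (fun v => ‖e + (b - g v • φ v)‖ ^ 2) μ := by
        have heq : (fun v => ‖e + (b - g v • φ v)‖ ^ 2) =
            fun v => (‖e‖ ^ 2 + 2 * ⟪e, b - g v • φ v⟫) + ‖b - g v • φ v‖ ^ 2 := by
          funext v; rw [norm_add_sq_real]
        rw [heq]
        exact hintE.add hintcsq
      have hinth_le : (∫ v, ‖e + (b - g v • φ v)‖ ^ 2 ∂μ) ≤ (n + 1 : ℕ) * C := by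
        have heq2 : (∫ v, ‖e + (b - g v • φ v)‖ ^ 2 ∂μ) =
            ‖e‖ ^ 2 + 2 * ⟪e, (0 : H)⟫ + ∫ v, ‖b - g v • φ v‖ ^ 2 ∂μ := by
          have heq : (fun v => ‖e + (b - g v • φ v)‖ ^ 2) =
              fun v => (‖e‖ ^ 2 + 2 * ⟪e, b - g v • φ v⟫) + ‖b - g v • φ v‖ ^ 2 := by
            funext v; rw [norm_add_sq_real]
          rw [heq, integral_add hintE hintcsq,
            integral_add (integrable_const _) hintc_inner,
            integral_const, integral_const_mul, integral_inner hintc, hintc0]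
          simp
        rw [heq2, inner_zero_right]
        push_cast
        nlinarith [hintcsq_le, hu]
      obtain ⟨v, hv⟩ := exists_le_integral hinth
      refine ⟨Fin.snoc u v, ?_⟩
      set w : Fin (n + 1) → EuclideanSpace ℝ (Fin d) := Fin.snoc u v with hw
      have hsum : ∑ i : Fin (n + 1), g (w i) • φ (w i) = S + g v • φ v := by
        rw [Fin.sum_univ_castSucc]
        simp [hS, hw]
      rw [hsum]
      have harr : ((n + 1 : ℕ) : ℝ) • b - (S + g v • φ v) = e + (b - g v • φ v) := by
        rw [he]; push_cast; module
      rw [harr]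
      exact le_trans hv hinth_le
  obtain ⟨u, hu⟩ := main m
  refine ⟨u, ?_⟩
  have hmpos : (0 : ℝ) < m := by exact_mod_cast hm
  have h1 : b - (1 / (m : ℝ)) • ∑ i, g (u i) • φ (u i) =
      (1 / (m : ℝ)) • ((m : ℝ) • b - ∑ i, g (u i) • φ (u i)) := by
    rw [smul_sub, smul_smul, one_div, inv_mul_cancel₀ (ne_of_gt hmpos), one_smul]
  rw [h1, norm_smul]
  have h2 : ‖(m : ℝ) • b - ∑ i, g (u i) • φ (u i)‖ ≤ Real.sqrt ((m : ℝ) * C) := by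
    rw [← Real.sqrt_sq (norm_nonneg _)]
    exact Real.sqrt_le_sqrt hu
  calc ‖(1 / (m : ℝ))‖ * ‖(m : ℝ) • b - ∑ i, g (u i) • φ (u i)‖
      ≤ (1 / (m : ℝ)) * Real.sqrt ((m : ℝ) * C) := by
        rw [Real.norm_eq_abs, abs_of_pos (by positivity)]
        exact mul_le_mul_of_nonneg_left h2 (by positivity)
    _ = Real.sqrt K * Real.sqrt (∫ v, g v ^ 2 ∂μ) / Real.sqrt m := by
        rw [hC, Real.sqrt_mul (le_of_lt hmpos), Real.sqrt_mul hK0,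
          eq_div_iff (by positivity : Real.sqrt (m : ℝ) ≠ 0)]
        have hmm : Real.sqrt (m : ℝ) * Real.sqrt (m : ℝ) = (m : ℝ) :=
          Real.mul_self_sqrt (le_of_lt hmpos)
        have hm0 : (m : ℝ) ≠ 0 := ne_of_gt hmpos
        field_simp
        linear_combination (Real.sqrt K * Real.sqrt (∫ v, g v ^ 2 ∂μ)) * hmm
end

section
/- In the 2-mixture model, the exponential pointwise mutual information is given by exp(PMI((i,j),(s,t))) = (N/4)(δ^{is} + δ^{it} + δ^{js} + δ^{jt}) for all unordered pairs (i,j), (s,t). In particular exp(PMI((i,i),(j,j))) = 0 for i ≠ j, exp(PMI((i,i),(i,j))) = N/2 for i ≠ j, and exp(PMI((i,i),(i,i))) = N. -/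
open scoped BigOperators

/-- Kronecker delta as a real number. -/
noncomputable def kdelta {N : ℕ} (i ℓ : Fin N) : ℝ := if i = ℓ then 1 else 0

/-- Conditional density of the unordered pair `(i,j)` given latent class `ℓ`
in the 2-mixture model. -/
noncomputable def condDens {N : ℕ} (i j ℓ : Fin N) : ℝ :=
  (kdelta i ℓ + kdelta j ℓ) / ((N : ℝ) + 1)

/-- Marginal density of the unordered pair `(i,j)` in the 2-mixture model. -/
noncomputable def margDens {N : ℕ} (i j : Fin N) : ℝ :=
  (1 / (N : ℝ)) * ∑ ℓ, condDens i j ℓ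

/-- The exponential pointwise mutual information between unordered pairs `(i,j)` and
`(s,t)` in the 2-mixture model:
`exp(PMI) = (1/N) ∑_ℓ [p_{X|Z}((i,j)|ℓ)/p_X((i,j))]·[p_{Y|Z}((s,t)|ℓ)/p_Y((s,t))]`. -/
noncomputable def expPMI {N : ℕ} (i j s t : Fin N) : ℝ :=
  (1 / (N : ℝ)) * ∑ ℓ, (condDens i j ℓ / margDens i j) * (condDens s t ℓ / margDens s t)

/-! Every pair has marginal density `2 / (N (N + 1))`, so the likelihood ratio
`p_{X|Z}((i,j)|ℓ) / p_X((i,j))` is `(N/2)(δ^{iℓ} + δ^{jℓ})`. Multiplying two such ratios and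
averaging over `ℓ`, the orthogonality `∑_ℓ δ^{iℓ} δ^{sℓ} = δ^{is}` gives the formula. -/

open Finset

section

variable {N : ℕ}

@[simp]
lemma kdelta_self (i : Fin N) : kdelta i i = 1 := if_pos rfl

lemma kdelta_of_ne {i j : Fin N} (h : i ≠ j) : kdelta i j = 0 := if_neg h

lemma sum_kdelta (i : Fin N) : ∑ ℓ, kdelta i ℓ = 1 := by
  simp [kdelta]

lemma sum_kdelta_mul_kdelta (i s : Fin N) : ∑ ℓ, kdelta i ℓ * kdelta s ℓ = kdelta i s := by
  simp [kdelta]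

lemma natCast_ne_zero_of_fin (i : Fin N) : (N : ℝ) ≠ 0 :=
  Nat.cast_ne_zero.mpr (Fin.pos i).ne'

lemma margDens_eq (i j : Fin N) : margDens i j = 2 / ((N : ℝ) * ((N : ℝ) + 1)) := by
  have hN := natCast_ne_zero_of_fin i
  unfold margDens condDens
  rw [← sum_div, sum_add_distrib, sum_kdelta, sum_kdelta]
  field_simp
  ring

lemma condDens_div_margDens (i j ℓ : Fin N) :
    condDens i j ℓ / margDens i j = (N : ℝ) * (kdelta i ℓ + kdelta j ℓ) / 2 := by
  have hN := natCast_ne_zero_of_fin i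
  rw [margDens_eq, condDens]
  field_simp

lemma expPMI_eq (i j s t : Fin N) :
    expPMI i j s t = ((N : ℝ) / 4) * (kdelta i s + kdelta i t + kdelta j s + kdelta j t) := by
  have hN := natCast_ne_zero_of_fin i
  have expand : ∀ ℓ : Fin N,
      condDens i j ℓ / margDens i j * (condDens s t ℓ / margDens s t) =
        (N : ℝ) ^ 2 / 4 * (kdelta i ℓ * kdelta s ℓ + kdelta i ℓ * kdelta t ℓ +
          kdelta j ℓ * kdelta s ℓ + kdelta j ℓ * kdelta t ℓ) := fun ℓ => by
    rw [condDens_div_margDens, condDens_div_margDens]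
    ring
  rw [expPMI, sum_congr rfl fun ℓ _ => expand ℓ, ← mul_sum]
  simp only [sum_add_distrib, sum_kdelta_mul_kdelta]
  field_simp

end

theorem two_mixture_expPMI_general {N : ℕ} :
    (∀ i j s t : Fin N, expPMI i j s t =
        ((N : ℝ) / 4) * (kdelta i s + kdelta i t + kdelta j s + kdelta j t)) ∧
      (∀ i j : Fin N, i ≠ j → expPMI i i j j = 0) ∧
      (∀ i j : Fin N, i ≠ j → expPMI i i i j = (N : ℝ) / 2) ∧
      (∀ i : Fin N, expPMI i i i i = (N : ℝ)) := by
  refine ⟨expPMI_eq, fun i j h => ?_, fun i j h => ?_, fun i => ?_⟩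
  · simp [expPMI_eq, kdelta_of_ne h]
  · rw [expPMI_eq, kdelta_of_ne h]
    simp only [kdelta_self]
    ring
  · rw [expPMI_eq]
    simp only [kdelta_self]
    ring

/-- In the 2-mixture model,
`exp(PMI((i,j),(s,t))) = (N/4)(δ^{is} + δ^{it} + δ^{js} + δ^{jt})`; in particular
`exp(PMI((i,i),(j,j))) = 0` and `exp(PMI((i,i),(i,j))) = N/2` for `i ≠ j`, and
`exp(PMI((i,i),(i,i))) = N`. -/
theorem two_mixture_expPMI {N : ℕ} (hN : 0 < N) :
    (∀ i j s t : Fin N, expPMI i j s t =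
        ((N : ℝ) / 4) * (kdelta i s + kdelta i t + kdelta j s + kdelta j t)) ∧
      (∀ i j : Fin N, i ≠ j → expPMI i i j j = 0) ∧
      (∀ i j : Fin N, i ≠ j → expPMI i i i j = (N : ℝ) / 2) ∧
      (∀ i : Fin N, expPMI i i i i = (N : ℝ)) :=
  two_mixture_expPMI_general
end

section
/- Let N ≥ 2, d ≥ 2, and ε > 0. In the 2-mixture model, there exist points u₁,...,u_N on the unit sphere of ℝ^d and a Gaussian kernel k with RKHS H such that the embeddings h((i,j)) := (√N/2)(k(uᵢ,·) + k(uⱼ,·)) satisfy |⟨h((i,j)), h((s,t))⟩_H - exp(PMI((i,j),(s,t)))| < ε for all unordered pairs (i,j), (s,t), where exp(PMI((i,j),(s,t))) = (N/4)(δ^{is}+δ^{it}+δ^{js}+δ^{jt}). -/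
/-!
Bilinearity gives `⟪h(i,j), h(s,t)⟫ = (N/4)(k(uᵢ,uₛ) + k(uᵢ,uₜ) + k(uⱼ,uₛ) + k(uⱼ,uₜ))` and
`k(u,u) = 1`, so it suffices that every off-diagonal kernel value `k(uₐ,u_b)` be below `ε/N`.
For `d ≥ 2` the unit sphere is connected with more than one point, hence infinite, and contains
`N` distinct points; for each of the finitely many pairs of distinct points,
`exp(-‖uₐ - u_b‖²/(2σ²)) → 0` as `σ → 0⁺`.
-/

open scoped RealInnerProductSpace

open Filter Topology Real

theorem exists_injective_norm_eq_one {E : Type*} [NormedAddCommGroup E] [NormedSpace ℝ E]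
    (hE : 1 < Module.rank ℝ E) (n : ℕ) :
    ∃ u : Fin n → E, Function.Injective u ∧ ∀ i, ‖u i‖ = 1 := by
  have : Nontrivial E := rank_pos_iff_nontrivial.mp (zero_lt_one.trans hE)
  obtain ⟨x, hx⟩ := exists_norm_eq E zero_le_one
  have hx0 : x ≠ 0 := norm_ne_zero_iff.mp (by rw [hx]; exact one_ne_zero)
  have hx_ne_neg : x ≠ -x := by
    intro h
    have : (2 : ℝ) • x = 0 := by rw [two_smul]; nth_rewrite 2 [h]; exact add_neg_cancel x
    exact hx0 ((smul_eq_zero.mp this).resolve_left two_ne_zero)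
  have hsphere : (Metric.sphere (0 : E) 1).Infinite :=
    (isConnected_sphere hE 0 zero_le_one).isPreconnected.infinite_of_nontrivial
      ⟨x, by simpa using hx, -x, by simpa using hx, hx_ne_neg⟩
  refine ⟨fun i => hsphere.natEmbedding _ i, fun i j h => ?_, fun i => by simp⟩
  exact Fin.val_injective ((hsphere.natEmbedding _).injective (Subtype.val_injective h))

theorem tendsto_exp_neg_sq_div_nhdsGT_zero {r : ℝ} (hr : r ≠ 0) :
    Tendsto (fun σ : ℝ => exp (-r ^ 2 / (2 * σ ^ 2))) (𝓝[>] 0) (𝓝 0) := by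
  have hsq : Tendsto (fun σ : ℝ => σ ^ 2) (𝓝[>] 0) (𝓝[>] 0) := by
    refine tendsto_nhdsWithin_of_tendsto_nhds_of_eventually_within _ ?_ ?_
    · simpa using ((continuous_pow 2).tendsto (0 : ℝ)).mono_left nhdsWithin_le_nhds
    · filter_upwards [self_mem_nhdsWithin] with σ hσ using pow_pos (Set.mem_Ioi.mp hσ) 2
  have hexp := tendsto_exp_atBot.comp <| tendsto_neg_atTop_atBot.comp <|
    (tendsto_inv_nhdsGT_zero.comp hsq).const_mul_atTop (by positivity : 0 < r ^ 2 / 2)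
  refine hexp.congr fun σ => ?_
  simp only [Function.comp_apply]
  congr 1
  ring

theorem exists_exp_neg_sq_div_lt_of_injective {ι E : Type*} [Finite ι] [NormedAddCommGroup E]
    {u : ι → E} (hu : Function.Injective u) {η : ℝ} (hη : 0 < η) :
    ∃ σ > 0, ∀ a b, a ≠ b → exp (-‖u a - u b‖ ^ 2 / (2 * σ ^ 2)) < η := by
  have hsep : ∀ᶠ σ in 𝓝[>] (0 : ℝ), ∀ a b, a ≠ b → exp (-‖u a - u b‖ ^ 2 / (2 * σ ^ 2)) < η := by
    refine eventually_all.2 fun a => eventually_all.2 fun b => ?_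
    by_cases hab : a = b
    · simp [hab]
    · have hr : ‖u a - u b‖ ≠ 0 := norm_ne_zero_iff.mpr (sub_ne_zero.mpr (hu.ne hab))
      exact ((tendsto_exp_neg_sq_div_nhdsGT_zero hr).eventually_lt_const hη).mono
        fun σ h _ => h
  exact (hsep.and self_mem_nhdsWithin).exists.imp fun σ h => ⟨h.2, h.1⟩

theorem abs_inner_smul_add_sub_lt {H : Type*} [NormedAddCommGroup H] [InnerProductSpace ℝ H]
    {c : ℝ} (hc : c ≠ 0) {x y z w : H} {p q r s η : ℝ} (hxz : |⟪x, z⟫ - p| < η)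
    (hxw : |⟪x, w⟫ - q| < η) (hyz : |⟪y, z⟫ - r| < η) (hyw : |⟪y, w⟫ - s| < η) :
    |⟪c • (x + y), c • (z + w)⟫ - c ^ 2 * (p + q + r + s)| < c ^ 2 * (4 * η) := by
  have hexpand : ⟪c • (x + y), c • (z + w)⟫ - c ^ 2 * (p + q + r + s) =
      c ^ 2 * ((⟪x, z⟫ - p) + (⟪x, w⟫ - q) + (⟪y, z⟫ - r) + (⟪y, w⟫ - s)) := by
    simp only [real_inner_smul_left, real_inner_smul_right, inner_add_left, inner_add_right]
    ring
  rw [hexpand, abs_mul, abs_of_pos (by positivity)]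
  refine mul_lt_mul_of_pos_left ?_ (by positivity)
  rw [abs_lt] at hxz hxw hyz hyw ⊢
  constructor <;> linarith

/-- KME-CLIP can approximate the exponential PMI of the 2-mixture model arbitrarily well:
for `N ≥ 2`, `d ≥ 2`, `ε > 0`, there exist points `u₁, …, u_N` on the unit sphere of `ℝ^d`
and a Gaussian length-scale `σ > 0` such that, for any realization of the Gaussian RKHS
by a feature map `φ` (i.e. `⟪φ a, φ b⟫ = exp(-‖a-b‖²/(2σ²))`), the embeddings
`h((i,j)) = (√N/2)(k(uᵢ,·) + k(uⱼ,·))` satisfy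
`|⟨h((i,j)), h((s,t))⟩_H - (N/4)(δ^{is}+δ^{it}+δ^{js}+δ^{jt})| < ε` for all pairs, where
`(N/4)(δ^{is}+δ^{it}+δ^{js}+δ^{jt}) = exp(PMI((i,j),(s,t)))` in the 2-mixture model. -/
theorem kme_clip_approximates_expPMI_two_mixture (N d : ℕ) (hN : 2 ≤ N) (hd : 2 ≤ d)
    (ε : ℝ) (hε : 0 < ε) :
    ∃ u : Fin N → EuclideanSpace ℝ (Fin d),
      (∀ i, ‖u i‖ = 1) ∧
      ∃ σ : ℝ, 0 < σ ∧
        ∀ (H : Type) (_ : NormedAddCommGroup H) (_ : InnerProductSpace ℝ H)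
          (φ : EuclideanSpace ℝ (Fin d) → H),
          (∀ a b, ⟪φ a, φ b⟫ = Real.exp (-‖a - b‖ ^ 2 / (2 * σ ^ 2))) →
          ∀ i j s t : Fin N,
            |(⟪(Real.sqrt N / 2) • (φ (u i) + φ (u j)),
                (Real.sqrt N / 2) • (φ (u s) + φ (u t))⟫ : ℝ) -
              ((N : ℝ) / 4) * (kdelta i s + kdelta i t + kdelta j s + kdelta j t)| < ε := by
  have hN0 : (0 : ℝ) < N := by exact_mod_cast (show 0 < N by omega)
  have hrank : 1 < Module.rank ℝ (EuclideanSpace ℝ (Fin d)) := by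
    rw [← Module.finrank_eq_rank, finrank_euclideanSpace_fin]
    exact_mod_cast hd
  obtain ⟨u, hu_inj, hu_norm⟩ := exists_injective_norm_eq_one hrank N
  obtain ⟨σ, hσ, hsep⟩ := exists_exp_neg_sq_div_lt_of_injective hu_inj (div_pos hε hN0)
  refine ⟨u, hu_norm, σ, hσ, fun H _ _ φ hφ i j s t => ?_⟩
  have hkernel : ∀ a b, |⟪φ (u a), φ (u b)⟫ - kdelta a b| < ε / N := by
    intro a b
    rw [hφ, kdelta]
    split_ifs with hab
    · simpa [hab] using div_pos hε hN0
    · simpa [abs_of_pos (exp_pos _)] using hsep a b hab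
  have hscale : (√N / 2) ^ 2 = (N : ℝ) / 4 := by
    rw [div_pow, sq_sqrt hN0.le]
    norm_num
  have hbound := abs_inner_smul_add_sub_lt (by positivity : √N / 2 ≠ 0)
    (hkernel i s) (hkernel i t) (hkernel j s) (hkernel j t)
  rwa [hscale, show (N : ℝ) / 4 * (4 * (ε / N)) = ε by field_simp] at hbound
end
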